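/- arXiv:0705.4326 — 2 statements merged into one kernel-verified Lean document; each statement's English description precedes it below -/
import Mathlib

section
/- There do not exist irrational real numbers x₁, x₂ with 0 < x₁ < 2, 0 < x₂ < 2 and x₁ + x₂ = 8/3 such that simultaneously ⌊x₁⌋ + ⌊x₂⌋ = 2, ⌊2x₁⌋ + ⌊2x₂⌋ = 5, ⌊(5/2)x₁⌋ + ⌊(5/2)x₂⌋ = 6, ⌊3x₁⌋ + ⌊3x₂⌋ = 7, and ⌊(7/2)x₁⌋ + ⌊(7/2)x₂⌋ = 9. (This is the arithmetic core of Case I(v) in the proof of Lemma 3.4, where xᵢ = θᵢ/π are the rotation angles of the elliptic closed geodesic.) -/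
/-!
Both angles lie in `[1, 2)`, and one of them, say `y`, is at least `3/2`, so `x ≤ 7/6`.
Each remaining floor equation then pins `⌊c x⌋` from above and forces a larger lower bound on
`y`: `y ≥ 8/5` from `c = 5/2`, then `y ≥ 12/7` from `c = 7/2`, which leaves `x ≤ 20/21 < 1`.
-/

theorem le_of_floor_add_floor_eq {a b : ℝ} {m n : ℤ} (h : ⌊a⌋ + ⌊b⌋ = n) (ha : a < m) :
    (n - m + 1 : ℝ) ≤ b := by
  have hfloor_a : ⌊a⌋ < m := Int.floor_lt.mpr ha
  have hfloor_b : n - m + 1 ≤ ⌊b⌋ := by omega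
  exact_mod_cast Int.le_floor.mp hfloor_b

theorem false_of_floor_sums_of_three_halves_le {x y : ℝ} (hsum : x + y = 8 / 3)
    (hx : 1 ≤ x) (hy : 3 / 2 ≤ y)
    (h5 : ⌊(5 / 2 : ℝ) * x⌋ + ⌊(5 / 2 : ℝ) * y⌋ = 6)
    (h7 : ⌊(7 / 2 : ℝ) * x⌋ + ⌊(7 / 2 : ℝ) * y⌋ = 9) : False := by
  have hy₅ : (6 - 3 + 1 : ℝ) ≤ 5 / 2 * y :=
    mod_cast le_of_floor_add_floor_eq (m := 3) h5 (by push_cast; linarith)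
  have hy₇ : (9 - 4 + 1 : ℝ) ≤ 7 / 2 * y :=
    mod_cast le_of_floor_add_floor_eq (m := 4) h7 (by push_cast; linarith)
  linarith

/-- Arithmetic core of Case I(v) in the proof of Lemma 3.4: there are no
irrational rotation angles `x₁, x₂ ∈ (0,2)` with `x₁ + x₂ = 8/3` satisfying
all five floor-sum equations simultaneously. -/
theorem no_irrational_angles_case_Iv :
    ¬ ∃ x₁ x₂ : ℝ, Irrational x₁ ∧ Irrational x₂ ∧
      0 < x₁ ∧ x₁ < 2 ∧ 0 < x₂ ∧ x₂ < 2 ∧ x₁ + x₂ = 8 / 3 ∧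
      ⌊x₁⌋ + ⌊x₂⌋ = 2 ∧
      ⌊2 * x₁⌋ + ⌊2 * x₂⌋ = 5 ∧
      ⌊(5 / 2 : ℝ) * x₁⌋ + ⌊(5 / 2 : ℝ) * x₂⌋ = 6 ∧
      ⌊3 * x₁⌋ + ⌊3 * x₂⌋ = 7 ∧
      ⌊(7 / 2 : ℝ) * x₁⌋ + ⌊(7 / 2 : ℝ) * x₂⌋ = 9 := by
  rintro ⟨x, y, -, -, -, hx2, -, hy2, hsum, h1, h2, h5, -, h7⟩
  have hy1 : (2 - 2 + 1 : ℝ) ≤ y := mod_cast le_of_floor_add_floor_eq (m := 2) h1 (mod_cast hx2)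
  have hx1 : (2 - 2 + 1 : ℝ) ≤ x :=
    mod_cast le_of_floor_add_floor_eq (m := 2) (n := 2) (by rwa [add_comm] at h1) (mod_cast hy2)
  rcases lt_or_ge (2 * x) 3 with hx | hx
  · have hy : (5 - 3 + 1 : ℝ) ≤ 2 * y :=
      mod_cast le_of_floor_add_floor_eq (m := 3) h2 (mod_cast hx)
    exact false_of_floor_sums_of_three_halves_le hsum (by linarith) (by linarith) h5 h7
  · exact false_of_floor_sums_of_three_halves_le (x := y) (y := x)
      (by linarith) (by linarith) (by linarith) (by rwa [add_comm] at h5) (by rwa [add_comm] at h7)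
end

section
/- Let x₁, x₂ be irrational real numbers with x₁ + x₂ = 8/3, 1 < x₁ < 7/6 and 3/2 < x₂ < 2. If ⌊(5/2)x₁⌋ + ⌊(5/2)x₂⌋ = 6, then 1 < x₁ < 16/15 and 8/5 < x₂ < 2. (This is estimate (3.11) in the proof of Lemma 3.4.) -/
/-!
Since `5/2 < (5/2) x₁ < 35/12 < 3`, the first floor is `2`, so the second is `4`. Then
`4 ≤ (5/2) x₂`, and the inequality is strict because `(5/2) x₂` is irrational; hence
`x₂ > 8/5` and `x₁ = 8/3 - x₂ < 16/15`.
-/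

theorem Irrational.intCast_floor_lt {x : ℝ} (h : Irrational x) : (⌊x⌋ : ℝ) < x :=
  (Int.floor_le x).lt_of_ne (h.ne_int _).symm

theorem estimate_3_11_general (x₁ x₂ : ℝ) (h₂ : Irrational x₂)
    (hsum : x₁ + x₂ = 8 / 3)
    (h₁l : 1 < x₁) (h₂l : 3 / 2 < x₂) (h₂r : x₂ < 2)
    (hfloor : ⌊(5 / 2 : ℝ) * x₁⌋ + ⌊(5 / 2 : ℝ) * x₂⌋ = 6) :
    1 < x₁ ∧ x₁ < 16 / 15 ∧ 8 / 5 < x₂ ∧ x₂ < 2 := by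
  have hx₁ : ⌊(5 / 2 : ℝ) * x₁⌋ = 2 :=
    Int.floor_eq_iff.mpr ⟨by push_cast; linarith, by push_cast; linarith⟩
  have hx₂ : ⌊(5 / 2 : ℝ) * x₂⌋ = 4 := by omega
  have h4 : (4 : ℝ) < 5 / 2 * x₂ := by
    have := (h₂.ratCast_mul (q := 5 / 2) (by norm_num)).intCast_floor_lt
    push_cast at this
    rwa [hx₂, Int.cast_ofNat] at this
  exact ⟨h₁l, by linarith, by linarith, h₂r⟩

/-- Estimate (3.11) in the proof of Lemma 3.4. -/
theorem estimate_3_11 (x₁ x₂ : ℝ) (h₁ : Irrational x₁) (h₂ : Irrational x₂)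
    (hsum : x₁ + x₂ = 8 / 3)
    (h₁l : 1 < x₁) (h₁r : x₁ < 7 / 6) (h₂l : 3 / 2 < x₂) (h₂r : x₂ < 2)
    (hfloor : ⌊(5 / 2 : ℝ) * x₁⌋ + ⌊(5 / 2 : ℝ) * x₂⌋ = 6) :
    1 < x₁ ∧ x₁ < 16 / 15 ∧ 8 / 5 < x₂ ∧ x₂ < 2 :=
  estimate_3_11_general x₁ x₂ h₂ hsum h₁l h₂l h₂r hfloor
end
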